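/- Let a, b, τ₀, τ₁ be real numbers with τ₀ ≤ τ₁, and suppose v : ℝ → ℝ satisfies v'(t) = a·t + b on [τ₀, τ₁] and the sign constraint (a·τ₁ + b)·(a·τ₀ + b) ≥ 0 holds. If v_min ≤ v(τ₀) ≤ v_max and v_min ≤ v(τ₁) ≤ v_max, then v_min ≤ v(t) ≤ v_max for all t ∈ [τ₀, τ₁]. -/
import Mathlib

theorem stmt_6 (a b τ₀ τ₁ v_min v_max : ℝ) (h : τ₀ ≤ τ₁) (v : ℝ → ℝ)
    (hv : ∀ t ∈ Set.Icc τ₀ τ₁, HasDerivWithinAt v (a * t + b) (Set.Icc τ₀ τ₁) t)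
    (hsign : (a * τ₁ + b) * (a * τ₀ + b) ≥ 0)
    (h0 : v_min ≤ v τ₀ ∧ v τ₀ ≤ v_max) (h1 : v_min ≤ v τ₁ ∧ v τ₁ ≤ v_max) :
    ∀ t ∈ Set.Icc τ₀ τ₁, v_min ≤ v t ∧ v t ≤ v_max := by
  intro t ht
  have hconv : Convex ℝ (Set.Icc τ₀ τ₁) := convex_Icc _ _
  have hcont : ContinuousOn v (Set.Icc τ₀ τ₁) :=
    fun x hx => (hv x hx).continuousWithinAt
  have hint : interior (Set.Icc τ₀ τ₁) = Set.Ioo τ₀ τ₁ := interior_Icc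
  have hv' : ∀ x ∈ interior (Set.Icc τ₀ τ₁),
      HasDerivWithinAt v (a * x + b) (interior (Set.Icc τ₀ τ₁)) x := by
    intro x hx
    exact (hv x (interior_subset hx)).mono interior_subset
  have ht0 := ht.1
  have ht1 := ht.2
  rcases mul_nonneg_iff.mp hsign with ⟨hp1, hp0⟩ | ⟨hn1, hn0⟩
  · -- derivative nonneg on interior
    have hmono : MonotoneOn v (Set.Icc τ₀ τ₁) := by
      refine monotoneOn_of_hasDerivWithinAt_nonneg hconv hcont hv' ?_
      intro x hx
      rw [hint] at hx
      nlinarith [hx.1, hx.2, mul_nonneg (sub_nonneg.mpr hx.1.le) hp1,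
        mul_nonneg (sub_nonneg.mpr hx.2.le) hp0]
    exact ⟨le_trans h0.1 (hmono (Set.left_mem_Icc.mpr h) ht ht0),
      le_trans (hmono ht (Set.right_mem_Icc.mpr h) ht1) h1.2⟩
  · have hanti : AntitoneOn v (Set.Icc τ₀ τ₁) := by
      refine antitoneOn_of_hasDerivWithinAt_nonpos hconv hcont hv' ?_
      intro x hx
      rw [hint] at hx
      nlinarith [hx.1, hx.2, mul_nonpos_of_nonneg_of_nonpos (sub_nonneg.mpr hx.1.le) hn1,
        mul_nonpos_of_nonneg_of_nonpos (sub_nonneg.mpr hx.2.le) hn0]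
    exact ⟨le_trans h1.1 (hanti ht (Set.right_mem_Icc.mpr h) ht1),
      le_trans (hanti (Set.left_mem_Icc.mpr h) ht ht0) h0.2⟩
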